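/- Fix x₀ ∈ ℝ^{n+1} ∖ ℝ^{k−1} and let f : S(x₀; r) → ℝ^{n+1} be the inclusion of the sphere of center x₀ and radius r, with inward unit normal N(x) = (x₀ − x)/r and mean curvature vector H(x) = (1/r) N(x). Then the identity H(x) = −(x^⊥)_N / ‖x^⊥‖² for all x ∈ S(x₀; r) — where (x^⊥)_N = ⟨x^⊥, N(x)⟩ N(x) is the normal component of x^⊥ — holds if and only if x₀^⊥ = 0, i.e. x₀ ∈ ℝ^{k−1}. -/

import Mathlib

open scoped RealInnerProductSpace

/-- The component of `x` in `ℝ^{n-k+2} = (ℝ^{k-1})^⊥`. -/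
def perpPart (n k : ℕ) (x : EuclideanSpace ℝ (Fin (n + 1))) :
    EuclideanSpace ℝ (Fin (n + 1)) :=
  WithLp.toLp 2 (fun i : Fin (n + 1) => if (i : ℕ) < k - 1 then 0 else x i)

/-! Along the sphere the identity reads `⟪x^⊥, x₀⟫ = 0`, because `N x` is a unit vector and
`⟪x^⊥, x⟫ = ‖x^⊥‖²`. If `x₀^⊥ ≠ 0`, the point `x = x₀ + r • x₀^⊥ / ‖x₀^⊥‖` of the sphere
has `x^⊥` a positive multiple of `x₀^⊥`, so `⟪x^⊥, x₀⟫ = ⟪x^⊥, x₀^⊥⟫ > 0`. -/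

section GeneralInnerProductSpace

variable {E : Type*} [NormedAddCommGroup E] [InnerProductSpace ℝ E]

lemma smul_eq_neg_inv_norm_sq_smul_inner_smul_iff {p N : E} {c : ℝ} (hp : p ≠ 0) (hN : N ≠ 0) :
    c • N = -((‖p‖ ^ 2)⁻¹ • (⟪p, N⟫ • N)) ↔ ⟪p, N⟫ = -(c * ‖p‖ ^ 2) := by
  have hp2 : ‖p‖ ^ 2 ≠ 0 := by positivity
  rw [smul_smul, ← neg_smul, smul_left_inj hN]
  constructor <;> intro h <;> field_simp at h ⊢ <;> linarith

end GeneralInnerProductSpace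

section PerpPart

variable {n k : ℕ}

lemma perpPart_add (x y : EuclideanSpace ℝ (Fin (n + 1))) :
    perpPart n k (x + y) = perpPart n k x + perpPart n k y := by
  ext i
  simp only [perpPart, PiLp.add_apply, PiLp.toLp_apply]
  split <;> simp

lemma perpPart_smul (c : ℝ) (x : EuclideanSpace ℝ (Fin (n + 1))) :
    perpPart n k (c • x) = c • perpPart n k x := by
  ext i
  simp only [perpPart, PiLp.smul_apply, smul_eq_mul, PiLp.toLp_apply]
  split <;> simp

lemma perpPart_perpPart (x : EuclideanSpace ℝ (Fin (n + 1))) :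
    perpPart n k (perpPart n k x) = perpPart n k x := by
  ext i
  simp only [perpPart, PiLp.toLp_apply]
  split <;> simp [*]

lemma inner_perpPart_left (x y : EuclideanSpace ℝ (Fin (n + 1))) :
    ⟪perpPart n k x, y⟫ = ⟪perpPart n k x, perpPart n k y⟫ := by
  simp only [PiLp.inner_apply, RCLike.inner_apply, conj_trivial, perpPart]
  refine Finset.sum_congr rfl fun i _ => ?_
  split <;> simp

lemma real_inner_perpPart_self (x : EuclideanSpace ℝ (Fin (n + 1))) :
    ⟪perpPart n k x, x⟫ = ‖perpPart n k x‖ ^ 2 := by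
  rw [inner_perpPart_left, real_inner_self_eq_norm_sq]

lemma mean_curvature_identity_iff_inner_perpPart_eq_zero {x₀ x : EuclideanSpace ℝ (Fin (n + 1))}
    {r : ℝ} (hr : 0 < r) (hx : ‖x - x₀‖ = r) (hxp : perpPart n k x ≠ 0) :
    (1 / r) • ((1 / r) • (x₀ - x)) = -((‖perpPart n k x‖ ^ 2)⁻¹ •
        (⟪perpPart n k x, (1 / r) • (x₀ - x)⟫ • ((1 / r) • (x₀ - x)))) ↔
      ⟪perpPart n k x, x₀⟫ = 0 := by
  have hN : (1 / r) • (x₀ - x) ≠ 0 := by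
    refine smul_ne_zero (by positivity) (sub_ne_zero.mpr fun h => ?_)
    rw [h, sub_self, norm_zero] at hx
    exact hr.ne hx
  rw [smul_eq_neg_inv_norm_sq_smul_inner_smul_iff hxp hN, real_inner_smul_right, inner_sub_right,
    real_inner_perpPart_self]
  constructor <;> intro h
  · field_simp at h
    linarith
  · rw [h]
    ring

lemma perpPart_eq_zero_iff_forall_sphere {x₀ : EuclideanSpace ℝ (Fin (n + 1))} {r : ℝ}
    (hr : 0 < r) :
    (∀ x : EuclideanSpace ℝ (Fin (n + 1)), ‖x - x₀‖ = r → perpPart n k x ≠ 0 →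
        ⟪perpPart n k x, x₀⟫ = 0) ↔ perpPart n k x₀ = 0 := by
  refine ⟨fun h => ?_, fun h0 x _ _ => by rw [inner_perpPart_left, h0, inner_zero_right]⟩
  by_contra hv
  set v := perpPart n k x₀
  have hv_pos : 0 < ‖v‖ := norm_pos_iff.mpr hv
  set t := r / ‖v‖
  have ht : 0 < t := div_pos hr hv_pos
  have hperp : perpPart n k (x₀ + t • v) = (1 + t) • v := by
    rw [perpPart_add, perpPart_smul, perpPart_perpPart, add_smul, one_smul]
  have hsphere : ‖x₀ + t • v - x₀‖ = r := by
    rw [add_sub_cancel_left, norm_smul, Real.norm_of_nonneg ht.le, div_mul_cancel₀ r hv_pos.ne']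
  have hinner := h (x₀ + t • v) hsphere (by rw [hperp]; exact smul_ne_zero (by positivity) hv)
  rw [inner_perpPart_left, hperp, real_inner_smul_left, real_inner_self_eq_norm_sq] at hinner
  have : 0 < (1 + t) * ‖v‖ ^ 2 := by positivity
  exact this.ne' hinner

end PerpPart

theorem stmt16_general {n k : ℕ}
    (x₀ : EuclideanSpace ℝ (Fin (n + 1))) (r : ℝ) (hr : 0 < r)
    (N : EuclideanSpace ℝ (Fin (n + 1)) → EuclideanSpace ℝ (Fin (n + 1)))
    (hN : ∀ x, N x = (1 / r) • (x₀ - x)) :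
    (∀ x : EuclideanSpace ℝ (Fin (n + 1)), ‖x - x₀‖ = r → perpPart n k x ≠ 0 →
        (1 / r) • N x =
          -((‖perpPart n k x‖ ^ 2)⁻¹ • (⟪perpPart n k x, N x⟫ • N x))) ↔
      perpPart n k x₀ = 0 := by
  simp only [hN]
  rw [← perpPart_eq_zero_iff_forall_sphere hr]
  exact forall_congr' fun x => forall_congr' fun hx => forall_congr' fun hxp =>
    mean_curvature_identity_iff_inner_perpPart_eq_zero hr hx hxp

theorem stmt16 {n k : ℕ} (hk : 1 ≤ k)
    (x₀ : EuclideanSpace ℝ (Fin (n + 1))) (r : ℝ) (hr : 0 < r)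
    (N : EuclideanSpace ℝ (Fin (n + 1)) → EuclideanSpace ℝ (Fin (n + 1)))
    (hN : ∀ x, N x = (1 / r) • (x₀ - x)) :
    (∀ x : EuclideanSpace ℝ (Fin (n + 1)), ‖x - x₀‖ = r → perpPart n k x ≠ 0 →
        (1 / r) • N x =
          -((‖perpPart n k x‖ ^ 2)⁻¹ • (⟪perpPart n k x, N x⟫ • N x))) ↔
      perpPart n k x₀ = 0 :=
  stmt16_general x₀ r hr N hN
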